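/- Let J, W ⊆ ℝ be open sets, let a : J → ℝ be differentiable with a(R) ≠ 0 on J, and let b : J → ℝ be twice differentiable with b'(R) ≠ 0 on J. On the set D := {(R,w) ∈ J × W : 1 + b(R)w ≠ 0 and 1 + (b(R) − Rb'(R))w ≠ 0}, define α(R,w) := (1 + (b(R) − Rb'(R))w)/(1 + b(R)w), π := a(R)/α(R,w) − 1 and χ := π − (R/(3a(R)))·∂_R(a(R)/α(R,w)), where ∂_R is the partial derivative with respect to the first variable. Then on D: χ = π + 1/3 + (1/3)(π+1)·[(π+1)·A₁(R) + A₂(R)], where A₁(R) := −R·b''(R)/(a(R)²·b'(R)) and A₂(R) := R·b''(R)/(a(R)·b'(R)) − R·a'(R)/a(R)² − 1/a(R). -/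

import Mathlib

noncomputable section

/-- The metric function `α` of a thermodynamic Stephani universe, as a function of `R`
for fixed `w`. -/
def alphaS (b : ℝ → ℝ) (w : ℝ) : ℝ → ℝ :=
  fun R => (1 + (b R - R * deriv b R) * w) / (1 + b R * w)

/-- The hydrodynamic quantity `π = p/ρ = a/α − 1` of a thermodynamic Stephani universe. -/
def piS (a b : ℝ → ℝ) (w R : ℝ) : ℝ := a R / alphaS b w R - 1

/-- The square of the speed of sound `χ = π − (R/(3a)) ∂_R(a/α)` of a thermodynamic
Stephani universe. -/
def chiS (a b : ℝ → ℝ) (w R : ℝ) : ℝ :=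
  piS a b w R - R / (3 * a R) * deriv (fun R' => a R' / alphaS b w R') R

/-!
With `u = 1 + b w` and `v = 1 + (b − R b') w` we have `π + 1 = a u / v`, and `v' = −R b'' w`
since `(b − R b')' = −R b''`. The quotient rule makes `χ` a rational expression in
`a, a', b', b'', u, v`. On the other side the `b''`-terms of `A₁, A₂` combine to
`(π + 1)(1 − u/v) R b''/(a b')`, and `v − u = −R b' w` cancels the `b'` in the denominator.
-/

theorem hasDerivAt_sub_mul_deriv {f : ℝ → ℝ} {x : ℝ} (hf : DifferentiableAt ℝ f x)
    (hf' : DifferentiableAt ℝ (deriv f) x) :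
    HasDerivAt (fun y => f y - y * deriv f y) (-(x * deriv (deriv f) x)) x := by
  have h := hf.hasDerivAt.sub ((hasDerivAt_id x).mul hf'.hasDerivAt)
  exact h.congr_deriv (by simp only [id_eq]; ring)

theorem div_alphaS_eq (a b : ℝ → ℝ) (w : ℝ) :
    (fun R => a R / alphaS b w R)
      = fun R => a R * (1 + b R * w) / (1 + (b R - R * deriv b R) * w) := by
  funext R
  exact div_div_eq_mul_div _ _ _

theorem hasDerivAt_div_alphaS {a b : ℝ → ℝ} {w R : ℝ} (ha : DifferentiableAt ℝ a R)
    (hb : DifferentiableAt ℝ b R) (hb' : DifferentiableAt ℝ (deriv b) R)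
    (hv : 1 + (b R - R * deriv b R) * w ≠ 0) :
    HasDerivAt (fun R' => a R' / alphaS b w R')
      (((deriv a R * (1 + b R * w) + a R * (deriv b R * w)) * (1 + (b R - R * deriv b R) * w)
          - a R * (1 + b R * w) * (-(R * deriv (deriv b) R) * w))
        / (1 + (b R - R * deriv b R) * w) ^ 2) R := by
  have hu : HasDerivAt (fun R' => 1 + b R' * w) (deriv b R * w) R :=
    (hb.hasDerivAt.mul_const w).const_add 1
  have hv' : HasDerivAt (fun R' => 1 + (b R' - R' * deriv b R') * w)
      (-(R * deriv (deriv b) R) * w) R :=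
    ((hasDerivAt_sub_mul_deriv hb hb').mul_const w).const_add 1
  rw [div_alphaS_eq]
  exact (ha.hasDerivAt.mul hu).div hv' hv

theorem indicatrix_identity {K : Type*} [Field K] {π a a' b' b'' R w u v : K} (ha : a ≠ 0)
    (hb' : b' ≠ 0) (hv : v ≠ 0) (hvu : v = u - R * b' * w) (hπ : π + 1 = a * u / v) :
    π - R / (3 * a) * (((a' * u + a * (b' * w)) * v - a * u * (-(R * b'') * w)) / v ^ 2)
      = π + 1 / 3 + 1 / 3 * (π + 1) * ((π + 1) * (-(R * b'') / (a ^ 2 * b'))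
          + (R * b'' / (a * b') - R * a' / a ^ 2 - 1 / a)) := by
  rw [hπ, eq_sub_of_add_eq hπ]
  field_simp
  rw [hvu]
  ring

theorem stephani_indicatrix_general
    (J W : Set ℝ)
    (a b : ℝ → ℝ)
    (ha : ∀ R ∈ J, DifferentiableAt ℝ a R)
    (ha0 : ∀ R ∈ J, a R ≠ 0)
    (hb : ∀ R ∈ J, DifferentiableAt ℝ b R ∧ DifferentiableAt ℝ (deriv b) R)
    (hb' : ∀ R ∈ J, deriv b R ≠ 0) :
    ∀ R w : ℝ, R ∈ J → w ∈ W →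
      1 + b R * w ≠ 0 → 1 + (b R - R * deriv b R) * w ≠ 0 →
      chiS a b w R
        = piS a b w R + 1 / 3
          + 1 / 3 * (piS a b w R + 1)
            * ((piS a b w R + 1) * (-(R * deriv (deriv b) R) / (a R ^ 2 * deriv b R))
              + (R * deriv (deriv b) R / (a R * deriv b R)
                  - R * deriv a R / a R ^ 2 - 1 / a R)) := by
  intro R w hR _ _ hv
  have hπ : piS a b w R + 1 = a R * (1 + b R * w) / (1 + (b R - R * deriv b R) * w) := by
    rw [piS, sub_add_cancel]
    exact congrFun (div_alphaS_eq a b w) R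
  rw [chiS, (hasDerivAt_div_alphaS (ha R hR) (hb R hR).1 (hb R hR).2 hv).deriv]
  exact indicatrix_identity (ha0 R hR) (hb' R hR) hv (by ring) hπ

/-- The indicatrix of a thermodynamic Stephani universe:
`χ = π + 1/3 + (1/3)(π+1)[(π+1)A₁(R) + A₂(R)]` with
`A₁ = −Rb''/(a²b')` and `A₂ = Rb''/(ab') − Ra'/a² − 1/a`. -/
theorem stephani_indicatrix
    (J W : Set ℝ) (hJ : IsOpen J) (hW : IsOpen W)
    (a b : ℝ → ℝ)
    (ha : ∀ R ∈ J, DifferentiableAt ℝ a R)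
    (ha0 : ∀ R ∈ J, a R ≠ 0)
    (hb : ∀ R ∈ J, DifferentiableAt ℝ b R ∧ DifferentiableAt ℝ (deriv b) R)
    (hb' : ∀ R ∈ J, deriv b R ≠ 0) :
    ∀ R w : ℝ, R ∈ J → w ∈ W →
      1 + b R * w ≠ 0 → 1 + (b R - R * deriv b R) * w ≠ 0 →
      chiS a b w R
        = piS a b w R + 1 / 3
          + 1 / 3 * (piS a b w R + 1)
            * ((piS a b w R + 1) * (-(R * deriv (deriv b) R) / (a R ^ 2 * deriv b R))
              + (R * deriv (deriv b) R / (a R * deriv b R)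
                  - R * deriv a R / a R ^ 2 - 1 / a R)) :=
  stephani_indicatrix_general J W a b ha ha0 hb hb'
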